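/- Let (u_1,…,u_d) be an orthonormal basis of ℝ^d and let V_1,…,V_d be positive reals. Let S = { ∑_{l=1}^d v_l u_l : v_l ∈ [−V_l, V_l] for all l } be the corresponding hypercube. Then for every orthonormal basis (w_1,…,w_d) of ℝ^d and every vector of positive reals σ = (σ_1,…,σ_d) with ∑_{i=1}^d σ_i² = 1, the privacy loss L(W,σ,S) = sup_{s∈S} ∑_{i=1}^d ⟨s,w_i⟩²/σ_i² satisfies L(W,σ,S) ≥ (∑_{l=1}^d V_l)². Moreover, equality is achieved by choosing w_i = u_i for all i and σ_l = √(V_l / ∑_{j=1}^d V_j). -/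

import Mathlib

open Finset


private lemma col_orth {d : ℕ} (u : Fin d → Fin d → ℝ)
    (hu : ∀ i j, ∑ k, u i k * u j k = if i = j then (1:ℝ) else 0)
    (j k : Fin d) : ∑ l, u l j * u l k = if j = k then (1:ℝ) else 0 := by
  let U : Matrix (Fin d) (Fin d) ℝ := Matrix.of u
  have h1 : U * U.transpose = 1 := by
    ext i j
    simpa [Matrix.mul_apply, Matrix.one_apply, U] using hu i j
  have h2 : U.transpose * U = 1 := mul_eq_one_comm.mp h1
  have h3 := congrFun (congrFun h2 j) k
  simpa [Matrix.mul_apply, Matrix.one_apply, U] using h3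

private lemma parseval {d : ℕ} (w : Fin d → Fin d → ℝ)
    (hw : ∀ i j, ∑ k, w i k * w j k = if i = j then (1:ℝ) else 0)
    (s : Fin d → ℝ) : ∑ i, (∑ j, s j * w i j)^2 = ∑ j, (s j)^2 := by
  have hc := col_orth w hw
  have expand : ∀ i : Fin d, (∑ j, s j * w i j)^2
      = ∑ j, ∑ k, (s j * s k) * (w i j * w i k) := by
    intro i
    rw [sq, Finset.sum_mul_sum]
    exact Finset.sum_congr rfl fun j _ => Finset.sum_congr rfl fun k _ => by ring
  calc ∑ i, (∑ j, s j * w i j)^2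
      = ∑ i, ∑ j, ∑ k, (s j * s k) * (w i j * w i k) := by simp only [expand]
    _ = ∑ j, ∑ k, (s j * s k) * ∑ i, w i j * w i k := by
        rw [Finset.sum_comm]
        refine Finset.sum_congr rfl fun j _ => ?_
        rw [Finset.sum_comm]
        exact Finset.sum_congr rfl fun k _ => by rw [Finset.mul_sum]
    _ = ∑ j, (s j)^2 := by
        refine Finset.sum_congr rfl fun j _ => ?_
        simp only [hc, mul_ite, mul_one, mul_zero]
        rw [Finset.sum_ite_eq]
        simp [sq]

private def sgn (b : Bool) : ℝ := if b then 1 else -1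

private lemma sum_sgn_mul {d : ℕ} (i j : Fin d) :
    ∑ ε : Fin d → Bool, sgn (ε i) * sgn (ε j) = if i = j then (2:ℝ)^d else 0 := by
  by_cases h : i = j
  · subst h
    have : ∀ ε : Fin d → Bool, sgn (ε i) * sgn (ε i) = 1 := by
      intro ε; cases ε i <;> simp [sgn]
    simp only [this, Finset.sum_const, card_univ, nsmul_eq_mul, mul_one, if_pos rfl]
    simp [Fintype.card_fun]
  · rw [if_neg h]
    refine Finset.sum_ninvolution (fun ε => Function.update ε i (!ε i)) ?_ ?_ ?_ ?_
    · intro ε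
      have h1 : Function.update ε i (!ε i) i = !ε i := Function.update_self _ _ _
      have h2 : Function.update ε i (!ε i) j = ε j := Function.update_of_ne (Ne.symm h) _ _
      rw [h1, h2]
      cases ε i <;> cases ε j <;> simp [sgn]
    · intro ε _ heq
      have := congrFun heq i
      rw [Function.update_self] at this
      cases ε i <;> simp at this
    · intro ε; exact Finset.mem_univ _
    · intro ε; funext k
      by_cases hk : k = i
      · subst hk; simp
      · simp [Function.update_of_ne hk]

private lemma avg_sq {d : ℕ} (c : Fin d → ℝ) :
    ∑ ε : Fin d → Bool, (∑ l, sgn (ε l) * c l)^2 = 2^d * ∑ l, (c l)^2 := by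
  have expand : ∀ ε : Fin d → Bool, (∑ l, sgn (ε l) * c l)^2
      = ∑ l, ∑ m, (c l * c m) * (sgn (ε l) * sgn (ε m)) := by
    intro ε
    rw [sq, Finset.sum_mul_sum]
    exact Finset.sum_congr rfl fun l _ => Finset.sum_congr rfl fun m _ => by ring
  calc ∑ ε : Fin d → Bool, (∑ l, sgn (ε l) * c l)^2
      = ∑ l, ∑ m, (c l * c m) * ∑ ε : Fin d → Bool, sgn (ε l) * sgn (ε m) := by
        simp only [expand]
        rw [Finset.sum_comm]
        refine Finset.sum_congr rfl fun l _ => ?_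
        rw [Finset.sum_comm]
        exact Finset.sum_congr rfl fun m _ => by rw [Finset.mul_sum]
    _ = 2^d * ∑ l, (c l)^2 := by
        rw [Finset.mul_sum]
        refine Finset.sum_congr rfl fun l _ => ?_
        simp only [sum_sgn_mul, mul_ite, mul_zero]
        rw [Finset.sum_ite_eq]
        simp [sq]; ring


/-- For `S` a hypercube with side half-lengths `V l` along an orthonormal
basis `u`, for every orthonormal basis `w` and positive `σ` with `∑ σ i ^ 2 = 1`, the
privacy loss satisfies `L(W,σ,S) ≥ (∑ l, V l)²`, with equality for `w = u` and
`σ l = √(V l / ∑ j, V j)`. -/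
theorem stmt_2 (d : ℕ) (hd : 0 < d)
    (u : Fin d → Fin d → ℝ)
    (hu : ∀ i j, ∑ k, u i k * u j k = if i = j then (1 : ℝ) else 0)
    (V : Fin d → ℝ) (hV : ∀ l, 0 < V l)
    (S : Set (Fin d → ℝ))
    (hS : S = {s : Fin d → ℝ | ∃ v : Fin d → ℝ,
      (∀ l, -V l ≤ v l ∧ v l ≤ V l) ∧ s = fun k => ∑ l, v l * u l k})
    (w : Fin d → Fin d → ℝ)
    (hw : ∀ i j, ∑ k, w i k * w j k = if i = j then (1 : ℝ) else 0)
    (σ : Fin d → ℝ) (hσpos : ∀ i, 0 < σ i) (hσ : ∑ i, σ i ^ 2 = 1) :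
    sSup ((fun s => ∑ i, (∑ j, s j * w i j) ^ 2 / σ i ^ 2) '' S)
      ≥ (∑ l, V l) ^ 2
    ∧ (w = u → (∀ l, σ l = Real.sqrt (V l / ∑ j, V j)) →
      sSup ((fun s => ∑ i, (∑ j, s j * w i j) ^ 2 / σ i ^ 2) '' S)
        = (∑ l, V l) ^ 2) := by
  subst hS
  have hTpos : 0 < ∑ l, V l := Finset.sum_pos (fun l _ => hV l) ⟨⟨0, hd⟩, Finset.mem_univ _⟩
  set a : Fin d → Fin d → ℝ := fun l i => ∑ k, u l k * w i k with ha_def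
  -- rows of a are unit vectors
  have ha_row : ∀ l, ∑ i, (a l i) ^ 2 = 1 := by
    intro l
    have h := parseval w hw (u l)
    have h2 : ∑ j, (u l j) ^ 2 = 1 := by
      have h3 := hu l l
      rw [if_pos rfl] at h3
      rw [← h3]
      exact Finset.sum_congr rfl fun j _ => sq (u l j)
    calc ∑ i, (a l i) ^ 2 = ∑ i, (∑ j, u l j * w i j) ^ 2 := rfl
      _ = 1 := by rw [h, h2]
  have ha_col : ∀ i, ∑ l, (a l i) ^ 2 = 1 := by
    intro i
    have h := parseval u hu (w i)
    have h2 : ∑ j, (w i j) ^ 2 = 1 := by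
      have h3 := hw i i
      rw [if_pos rfl] at h3
      rw [← h3]
      exact Finset.sum_congr rfl fun j _ => sq (w i j)
    calc ∑ l, (a l i) ^ 2 = ∑ l, (∑ j, w i j * u l j) ^ 2 := by
          refine Finset.sum_congr rfl fun l _ => ?_
          congr 1
          exact Finset.sum_congr rfl fun j _ => mul_comm _ _
      _ = 1 := by rw [h, h2]
  -- inner products of hypercube points
  have hinner : ∀ (v : Fin d → ℝ) (i : Fin d),
      ∑ j, (fun k => ∑ l, v l * u l k) j * w i j = ∑ l, v l * a l i := by
    intro v i
    calc ∑ j, (∑ l, v l * u l j) * w i j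
        = ∑ j, ∑ l, v l * (u l j * w i j) := by
          refine Finset.sum_congr rfl fun j _ => ?_
          rw [Finset.sum_mul]
          exact Finset.sum_congr rfl fun l _ => by ring
      _ = ∑ l, ∑ j, v l * (u l j * w i j) := Finset.sum_comm
      _ = ∑ l, v l * a l i := by
          refine Finset.sum_congr rfl fun l _ => ?_
          rw [← Finset.mul_sum]
  have hval : ∀ v : Fin d → ℝ,
      ∑ i, (∑ j, (fun k => ∑ l, v l * u l k) j * w i j) ^ 2 / σ i ^ 2
        = ∑ i, (∑ l, v l * a l i) ^ 2 / σ i ^ 2 := by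
    intro v
    exact Finset.sum_congr rfl fun i _ => by rw [hinner v i]
  -- bounded above
  have hbdd : BddAbove ((fun s => ∑ i, (∑ j, s j * w i j) ^ 2 / σ i ^ 2) ''
      {s : Fin d → ℝ | ∃ v : Fin d → ℝ,
        (∀ l, -V l ≤ v l ∧ v l ≤ V l) ∧ s = fun k => ∑ l, v l * u l k}) := by
    refine ⟨(∑ l, V l ^ 2) * ∑ i, 1 / σ i ^ 2, ?_⟩
    rintro x ⟨s, ⟨v, hv, rfl⟩, rfl⟩
    simp only
    rw [hval v]
    calc ∑ i, (∑ l, v l * a l i) ^ 2 / σ i ^ 2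
        ≤ ∑ i, (∑ l, V l ^ 2) / σ i ^ 2 := by
          refine Finset.sum_le_sum fun i _ => ?_
          refine div_le_div_of_nonneg_right ?_ (by positivity) |>.trans_eq rfl
          calc (∑ l, v l * a l i) ^ 2
              ≤ (∑ l, (v l) ^ 2) * ∑ l, (a l i) ^ 2 :=
                Finset.sum_mul_sq_le_sq_mul_sq univ v (fun l => a l i)
            _ = ∑ l, (v l) ^ 2 := by rw [ha_col i, mul_one]
            _ ≤ ∑ l, V l ^ 2 :=
                Finset.sum_le_sum fun l _ => sq_le_sq' (hv l).1 (hv l).2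
      _ = (∑ l, V l ^ 2) * ∑ i, 1 / σ i ^ 2 := by
          rw [Finset.mul_sum]
          exact Finset.sum_congr rfl fun i _ => by rw [mul_one_div]
  -- average over sign vectors
  have havg : ∑ ε : Fin d → Bool, (∑ i, (∑ l, (sgn (ε l) * V l) * a l i) ^ 2 / σ i ^ 2)
      = 2 ^ d * ∑ i, (∑ l, (V l * a l i) ^ 2) / σ i ^ 2 := by
    rw [Finset.sum_comm, Finset.mul_sum]
    refine Finset.sum_congr rfl fun i _ => ?_
    rw [← Finset.sum_div]
    rw [show (∑ ε : Fin d → Bool, (∑ l, (sgn (ε l) * V l) * a l i) ^ 2) =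
      ∑ ε : Fin d → Bool, (∑ l, sgn (ε l) * (V l * a l i)) ^ 2 from
      Finset.sum_congr rfl fun ε _ => by
        rw [show (∑ l, (sgn (ε l) * V l) * a l i) = ∑ l, sgn (ε l) * (V l * a l i) from
          Finset.sum_congr rfl fun l _ => by ring]]
    rw [avg_sq (fun l => V l * a l i), mul_div_assoc]
  set t : Fin d → ℝ := fun l => ∑ i, (a l i) ^ 2 * σ i ^ 2 with ht_def
  set c : Fin d → ℝ := fun l => ∑ i, (a l i) ^ 2 / σ i ^ 2 with hc_def
  have hct : ∀ l, 1 ≤ c l * t l := by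
    intro l
    have hcs := Finset.sum_mul_sq_le_sq_mul_sq univ (fun i => a l i / σ i) (fun i => a l i * σ i)
    have e1 : ∑ i, (a l i / σ i) * (a l i * σ i) = 1 := by
      rw [← ha_row l]
      refine Finset.sum_congr rfl fun i _ => ?_
      have := (hσpos i).ne'
      field_simp
    rw [e1, one_pow] at hcs
    calc (1:ℝ) ≤ (∑ i, (a l i / σ i) ^ 2) * ∑ i, (a l i * σ i) ^ 2 := hcs
      _ = c l * t l := by
        congr 1
        · exact Finset.sum_congr rfl fun i _ => div_pow _ _ _
        · exact Finset.sum_congr rfl fun i _ => mul_pow _ _ _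
  have ht_pos : ∀ l, 0 < t l := by
    intro l
    have hc0 : 0 ≤ c l := Finset.sum_nonneg fun i _ => by positivity
    nlinarith [hct l]
  have hsum_t : ∑ l, t l = 1 := by
    rw [show (∑ l, t l) = ∑ l, ∑ i, (a l i) ^ 2 * σ i ^ 2 from rfl, Finset.sum_comm]
    rw [← hσ]
    refine Finset.sum_congr rfl fun i _ => ?_
    rw [← Finset.sum_mul, ha_col i, one_mul]
  have hA : (∑ l, V l) ^ 2 ≤ ∑ i, (∑ l, (V l * a l i) ^ 2) / σ i ^ 2 := by
    have step1 : (∑ l, V l) ^ 2 ≤ ∑ l, (V l) ^ 2 / t l := by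
      have h := Finset.sq_sum_div_le_sum_sq_div univ V (fun l _ => ht_pos l)
      rwa [hsum_t, div_one] at h
    have step2 : ∀ l, (V l) ^ 2 / t l ≤ (V l) ^ 2 * c l := by
      intro l
      rw [div_le_iff₀ (ht_pos l)]
      nlinarith [hct l, sq_nonneg (V l)]
    have step3 : ∑ i, (∑ l, (V l * a l i) ^ 2) / σ i ^ 2 = ∑ l, (V l) ^ 2 * c l := by
      rw [show (∑ i, (∑ l, (V l * a l i) ^ 2) / σ i ^ 2)
          = ∑ i, ∑ l, (V l) ^ 2 * ((a l i) ^ 2 / σ i ^ 2) from ?_, Finset.sum_comm]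
      · refine Finset.sum_congr rfl fun l _ => ?_
        rw [← Finset.mul_sum]
      · refine Finset.sum_congr rfl fun i _ => ?_
        rw [Finset.sum_div]
        refine Finset.sum_congr rfl fun l _ => ?_
        rw [mul_pow, mul_div_assoc]
    rw [step3]
    calc (∑ l, V l) ^ 2 ≤ ∑ l, (V l) ^ 2 / t l := step1
      _ ≤ ∑ l, (V l) ^ 2 * c l := Finset.sum_le_sum fun l _ => step2 l
  have hcard : (Finset.univ : Finset (Fin d → Bool)).card = 2 ^ d := by
    simp [Fintype.card_fun]
  have hex2 : ∃ v : Fin d → ℝ, (∀ l, -V l ≤ v l ∧ v l ≤ V l) ∧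
      (∑ l, V l) ^ 2 ≤ ∑ i, (∑ l, v l * a l i) ^ 2 / σ i ^ 2 := by
    have hsum_le : ∑ _ε : Fin d → Bool, (∑ l, V l) ^ 2
        ≤ ∑ ε : Fin d → Bool, (∑ i, (∑ l, (sgn (ε l) * V l) * a l i) ^ 2 / σ i ^ 2) := by
      rw [havg, Finset.sum_const, hcard, nsmul_eq_mul]
      push_cast
      exact mul_le_mul_of_nonneg_left hA (by positivity)
    obtain ⟨ε, _, hε⟩ := Finset.exists_le_of_sum_le ⟨fun _ => true, Finset.mem_univ _⟩ hsum_le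
    refine ⟨fun l => sgn (ε l) * V l, fun l => ?_, hε⟩
    refine ⟨?_, ?_⟩ <;> cases hεl : ε l <;> simp [sgn, hεl] <;> linarith [hV l]
  have hlow : (∑ l, V l) ^ 2 ≤ sSup ((fun s => ∑ i, (∑ j, s j * w i j) ^ 2 / σ i ^ 2) ''
      {s : Fin d → ℝ | ∃ v : Fin d → ℝ,
        (∀ l, -V l ≤ v l ∧ v l ≤ V l) ∧ s = fun k => ∑ l, v l * u l k}) := by
    obtain ⟨v, hb, hε⟩ := hex2
    have hmem : (∑ i, (∑ l, v l * a l i) ^ 2 / σ i ^ 2) ∈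
        ((fun s => ∑ i, (∑ j, s j * w i j) ^ 2 / σ i ^ 2) ''
          {s : Fin d → ℝ | ∃ v : Fin d → ℝ,
            (∀ l, -V l ≤ v l ∧ v l ≤ V l) ∧ s = fun k => ∑ l, v l * u l k}) :=
      ⟨fun k => ∑ l, v l * u l k, ⟨v, hb, rfl⟩, hval v⟩
    exact hε.trans (le_csSup hbdd hmem)
  refine ⟨hlow, ?_⟩
  intro hwu hσl
  subst hwu
  refine le_antisymm ?_ hlow
  have hσsq : ∀ l, σ l ^ 2 = V l / ∑ j, V j := by
    intro l
    rw [hσl l, Real.sq_sqrt (div_nonneg (hV l).le hTpos.le)]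
  refine csSup_le ⟨_, ⟨fun k => ∑ l, V l * w l k, ⟨V, fun l => ⟨by linarith [hV l], le_refl _⟩, rfl⟩, rfl⟩⟩ ?_
  rintro x ⟨s, ⟨v, hv, rfl⟩, rfl⟩
  refine le_trans (le_of_eq (hval v)) ?_
  have hva : ∀ i, ∑ l, v l * a l i = v i := by
    intro i
    have hai : ∀ l, a l i = if l = i then (1:ℝ) else 0 := fun l => hu l i
    simp only [hai, mul_ite, mul_one, mul_zero]
    rw [Finset.sum_ite_eq']
    simp
  rw [show (∑ i, (∑ l, v l * a l i) ^ 2 / σ i ^ 2) = ∑ i, (v i) ^ 2 / σ i ^ 2 from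
    Finset.sum_congr rfl fun i _ => by rw [hva i]]
  have hterm : ∀ i, (v i) ^ 2 / σ i ^ 2 ≤ V i * (∑ l, V l) := by
    intro i
    rw [div_le_iff₀ (pow_pos (hσpos i) 2), hσsq i]
    have h1 : V i * (∑ l, V l) * (V i / ∑ j, V j) = V i ^ 2 := by
      field_simp
    rw [h1]
    exact sq_le_sq' (hv i).1 (hv i).2
  calc ∑ i, (v i) ^ 2 / σ i ^ 2 ≤ ∑ i, V i * (∑ l, V l) :=
        Finset.sum_le_sum fun i _ => hterm i
    _ = (∑ l, V l) ^ 2 := by rw [← Finset.sum_mul, sq]
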